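/- Let δ be a real number. Define the 3×3 complex matrices ρ̃ = [[1/4, δ, 0],[δ, 1/2, δ],[0, δ, 1/4]] and τ = [[1/10 + 152δ²/225, 38δ/45, 152δ²/225],[38δ/45, 4/5 − 304δ²/225, 38δ/45],[152δ²/225, 38δ/45, 1/10 + 152δ²/225]]. On ℂ³⊗ℂ³ (basis |ab⟩, a,b ∈ {1,2,3}, first factor S, second factor C), let K₀ = Σ_{i=1}^{3} |ii⟩⟨ii| + Σ_{(i,j)∈{(1,2),(2,3),(1,3)}} |e⁺_{ij}⟩⟨e⁺_{ij}| and, for each (i,j) ∈ {(1,2),(2,3),(1,3)}, K_{(i,j)} = |22⟩⟨e⁻_{ij}|, where |e^{±}_{ij}⟩ = (|ij⟩ ± |ji⟩)/√2. Define the channel E(M) = K₀MK₀ᴴ + Σ_{(i,j)} K_{(i,j)} M K_{(i,j)}ᴴ. Then: (i) K₀ᴴK₀ + Σ_{(i,j)} K_{(i,j)}ᴴK_{(i,j)} = I₉; (ii) the partial trace of E(ρ̃⊗τ) over the first factor equals τ (the catalyst is exactly restored); (iii) the (1,3) entry of the partial trace of E(ρ̃⊗τ) over the second factor equals 152δ²/225,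 which is strictly positive whenever δ ≠ 0. -/

import Mathlib

open Matrix Kronecker

/-- The basis state `|ab⟩` of `ℂ³ ⊗ ℂ³`. -/
def ket (a b : Fin 3) : Fin 3 × Fin 3 → ℂ := fun p => if p = (a, b) then 1 else 0

/-- `|e⁺_{ij}⟩ = (|ij⟩ + |ji⟩)/√2`. -/
noncomputable def eplus (i j : Fin 3) : Fin 3 × Fin 3 → ℂ :=
  fun p => (ket i j p + ket j i p) / Real.sqrt 2

/-- `|e⁻_{ij}⟩ = (|ij⟩ - |ji⟩)/√2`. -/
noncomputable def eminus (i j : Fin 3) : Fin 3 × Fin 3 → ℂ :=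
  fun p => (ket i j p - ket j i p) / Real.sqrt 2

/-- The projection `K₀` onto the span of `|ii⟩` and `|e⁺_{ij}⟩`. -/
noncomputable def Kproj : Matrix (Fin 3 × Fin 3) (Fin 3 × Fin 3) ℂ :=
  (∑ i : Fin 3, Matrix.vecMulVec (ket i i) (star (ket i i)))
    + Matrix.vecMulVec (eplus 0 1) (star (eplus 0 1))
    + Matrix.vecMulVec (eplus 1 2) (star (eplus 1 2))
    + Matrix.vecMulVec (eplus 0 2) (star (eplus 0 2))

/-- The Kraus operator `K_{(i,j)} = |22⟩⟨e⁻_{ij}|`. -/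
noncomputable def Kminus (i j : Fin 3) : Matrix (Fin 3 × Fin 3) (Fin 3 × Fin 3) ℂ :=
  Matrix.vecMulVec (ket 1 1) (star (eminus i j))

noncomputable def rhoTilde (δ : ℝ) : Matrix (Fin 3) (Fin 3) ℂ :=
  !![1 / 4, δ, 0; δ, 1 / 2, δ; 0, δ, 1 / 4]

noncomputable def tauCat (δ : ℝ) : Matrix (Fin 3) (Fin 3) ℂ :=
  !![1 / 10 + 152 * δ ^ 2 / 225, 38 * δ / 45, 152 * δ ^ 2 / 225;
     38 * δ / 45, 4 / 5 - 304 * δ ^ 2 / 225, 38 * δ / 45;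
     152 * δ ^ 2 / 225, 38 * δ / 45, 1 / 10 + 152 * δ ^ 2 / 225]

/-- The covariant channel `E(M) = K₀MK₀ᴴ + Σ_{(i,j)} K_{(i,j)} M K_{(i,j)}ᴴ`. -/
noncomputable def chan (M : Matrix (Fin 3 × Fin 3) (Fin 3 × Fin 3) ℂ) :
    Matrix (Fin 3 × Fin 3) (Fin 3 × Fin 3) ℂ :=
  Kproj * M * Kprojᴴ + Kminus 0 1 * M * (Kminus 0 1)ᴴ
    + Kminus 1 2 * M * (Kminus 1 2)ᴴ + Kminus 0 2 * M * (Kminus 0 2)ᴴ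

/-- Partial trace over the first tensor factor (system `S`). -/
noncomputable def ptrFirst (M : Matrix (Fin 3 × Fin 3) (Fin 3 × Fin 3) ℂ) :
    Matrix (Fin 3) (Fin 3) ℂ :=
  Matrix.of fun a b => ∑ c : Fin 3, M (c, a) (c, b)

/-- Partial trace over the second tensor factor (system `C`). -/
noncomputable def ptrSecond (M : Matrix (Fin 3 × Fin 3) (Fin 3 × Fin 3) ℂ) :
    Matrix (Fin 3) (Fin 3) ℂ :=
  Matrix.of fun a b => ∑ c : Fin 3, M (a, c) (b, c)

/-!
Writing `S` for the swap operator on `ℂ³ ⊗ ℂ³`, `K₀` is the symmetrizer `(1 + S)/2`, and the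
`e⁻_{ij}` form an orthonormal basis of the antisymmetric subspace, so the Kraus operators are
complete because `(1 + S)/2 + (1 - S)/2 = 1`. The channel sends `M` to `K₀MK₀` plus the weight of
`M` on the antisymmetric subspace, placed on `|22⟩⟨22|`. Both pieces are invariant under
conjugation by `S`, so the two partial traces of the output agree and (iii) is read off from (ii).
For a product state, the partial trace of `K₀(ρ ⊗ τ)K₀` is `(tr ρ · τ + ρτ + τρ + tr τ · ρ)/4`,
so (ii) becomes a `3 × 3` polynomial identity in `δ`.
-/

section Swap

variable (R n : Type*) [DecidableEq n]

abbrev swapMatrix [Zero R] [One R] : Matrix (n × n) (n × n) R :=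
  Equiv.Perm.permMatrix R (Equiv.prodComm n n)

def symmetrizer [DivisionRing R] : Matrix (n × n) (n × n) R :=
  (2 : R)⁻¹ • (1 + swapMatrix R n)

variable {R n}

theorem swapMatrix_apply [Zero R] [One R] (p q : n × n) :
    swapMatrix R n p q = if q = p.swap then 1 else 0 := by
  simp [swapMatrix, PEquiv.toMatrix_apply, eq_comm]

variable [Fintype n]

theorem swapMatrix_mul_self [NonAssocSemiring R] : swapMatrix R n * swapMatrix R n = 1 := by
  rw [swapMatrix, ← permMatrix_mul, Equiv.Perm.mul_def]
  conv_lhs => arg 2; arg 1; rw [← Equiv.prodComm_symm]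
  rw [Equiv.symm_trans_self, Equiv.Perm.permMatrix, Equiv.toPEquiv_refl, PEquiv.toMatrix_refl]

theorem symmetrizer_mul_self [Field R] [NeZero (2 : R)] :
    symmetrizer R n * symmetrizer R n = symmetrizer R n := by
  have h : (1 + swapMatrix R n) * (1 + swapMatrix R n) = (2 : R) • (1 + swapMatrix R n) := by
    simp only [add_mul, mul_add, one_mul, mul_one, swapMatrix_mul_self, two_smul]
    abel
  rw [symmetrizer, Matrix.smul_mul, Matrix.mul_smul, h, smul_smul, smul_smul,
    inv_mul_cancel_right₀ two_ne_zero]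

theorem symmetrizer_mul_mul_symmetrizer_apply [Field R] (M : Matrix (n × n) (n × n) R)
    (p q : n × n) :
    (symmetrizer R n * M * symmetrizer R n) p q
      = 4⁻¹ * (M p q + M p.swap q + M p q.swap + M p.swap q.swap) := by
  simp only [symmetrizer, Matrix.smul_mul, Matrix.mul_smul, add_mul, mul_add, one_mul, mul_one,
    PEquiv.toMatrix_toPEquiv_mul, PEquiv.mul_toMatrix_toPEquiv, Matrix.add_apply,
    Matrix.smul_apply, Matrix.submatrix_apply, smul_eq_mul, id, Equiv.prodComm_apply,
    Equiv.prodComm_symm]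
  rw [show (4 : R) = 2 * 2 by norm_num, mul_inv]
  ring

end Swap

section Kraus

variable {α m n : Type*} [CommSemiring α] [StarRing α]

theorem vecMulVec_mul_mul_conjTranspose [Fintype m] (u : n → α) (v : m → α)
    (M : Matrix m m α) :
    vecMulVec u (star v) * M * (vecMulVec u (star v))ᴴ
      = (star v ⬝ᵥ M *ᵥ v) • vecMulVec u (star u) := by
  rw [conjTranspose_vecMulVec, star_star, vecMulVec_mul, vecMulVec_mul_vecMulVec,
    dotProduct_mulVec, vecMulVec_smul]

theorem conjTranspose_vecMulVec_mul_self [Fintype n] (u : n → α) (v : m → α) :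
    (vecMulVec u (star v))ᴴ * vecMulVec u (star v) = (star u ⬝ᵥ u) • vecMulVec v (star v) := by
  rw [conjTranspose_vecMulVec, star_star, vecMulVec_mul_vecMulVec, vecMulVec_smul]

end Kraus

section ThreeLevel

theorem inv_sqrt_two_mul_self : ((√2 : ℝ) : ℂ)⁻¹ * ((√2 : ℝ) : ℂ)⁻¹ = 2⁻¹ := by
  rw [← mul_inv, ← Complex.ofReal_mul, Real.mul_self_sqrt zero_le_two]
  norm_num

theorem ket_eq_single (a b : Fin 3) : ket a b = Pi.single (a, b) 1 := by
  ext p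
  simp [ket, Pi.single_apply]

theorem ket_apply_swap (a b : Fin 3) (p : Fin 3 × Fin 3) : ket a b p.swap = ket b a p := by
  simp [ket, Prod.swap_eq_iff_eq_swap]

theorem star_ket_dotProduct_ket (a b : Fin 3) : star (ket a b) ⬝ᵥ ket a b = 1 := by
  simp [ket_eq_single]

theorem Kproj_eq_symmetrizer : Kproj = symmetrizer ℂ (Fin 3) := by
  ext ⟨a, b⟩ ⟨c, d⟩
  simp only [Kproj, symmetrizer, swapMatrix_apply, Matrix.add_apply, Matrix.smul_apply,
    Matrix.one_apply, Matrix.vecMulVec_apply, Pi.star_apply, eplus, ket, Fin.sum_univ_three,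
    Prod.ext_iff, Prod.swap]
  fin_cases a <;> fin_cases b <;> fin_cases c <;> fin_cases d <;>
    simp +decide [Complex.conj_ofReal, div_eq_mul_inv, inv_sqrt_two_mul_self] <;> norm_num

theorem sum_vecMulVec_eminus :
    vecMulVec (eminus 0 1) (star (eminus 0 1)) + vecMulVec (eminus 1 2) (star (eminus 1 2))
      + vecMulVec (eminus 0 2) (star (eminus 0 2)) = (2 : ℂ)⁻¹ • (1 - swapMatrix ℂ (Fin 3)) := by
  ext ⟨a, b⟩ ⟨c, d⟩
  simp only [swapMatrix_apply, Matrix.add_apply, Matrix.sub_apply, Matrix.smul_apply,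
    Matrix.one_apply, Matrix.vecMulVec_apply, Pi.star_apply, eminus, ket, Prod.ext_iff, Prod.swap]
  fin_cases a <;> fin_cases b <;> fin_cases c <;> fin_cases d <;>
    simp +decide [Complex.conj_ofReal, div_eq_mul_inv, inv_sqrt_two_mul_self]

theorem Kproj_conjTranspose : Kprojᴴ = Kproj := by
  simp [Kproj, conjTranspose_sum]

theorem kraus_completeness :
    Kprojᴴ * Kproj + (Kminus 0 1)ᴴ * Kminus 0 1 + (Kminus 1 2)ᴴ * Kminus 1 2
      + (Kminus 0 2)ᴴ * Kminus 0 2 = 1 := by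
  rw [Kproj_conjTranspose, Kproj_eq_symmetrizer, symmetrizer_mul_self]
  simp only [Kminus, conjTranspose_vecMulVec_mul_self, star_ket_dotProduct_ket, one_smul, add_assoc]
  rw [← add_assoc (vecMulVec (eminus 0 1) _), sum_vecMulVec_eminus, symmetrizer]
  module

theorem star_eminus_dotProduct_mulVec_eminus (i j : Fin 3)
    (M : Matrix (Fin 3 × Fin 3) (Fin 3 × Fin 3) ℂ) :
    star (eminus i j) ⬝ᵥ M *ᵥ eminus i j
      = 2⁻¹ * (M (i, j) (i, j) - M (i, j) (j, i) - M (j, i) (i, j) + M (j, i) (j, i)) := by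
  have h : eminus i j = ((√2 : ℝ) : ℂ)⁻¹ • (ket i j - ket j i) := by
    ext p
    simp [eminus, div_eq_inv_mul]
  rw [h, ket_eq_single, ket_eq_single]
  simp only [star_smul, star_inv₀, RCLike.star_def, Complex.conj_ofReal, star_sub, Pi.star_single,
    star_one, mulVec_smul, mulVec_sub, mulVec_single, MulOpposite.op_one, one_smul, dotProduct_smul,
    dotProduct_sub, smul_dotProduct, sub_dotProduct, single_dotProduct, col_apply, one_mul,
    smul_eq_mul]
  rw [← inv_sqrt_two_mul_self]
  ring

theorem chan_eq (M : Matrix (Fin 3 × Fin 3) (Fin 3 × Fin 3) ℂ) :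
    chan M = symmetrizer ℂ (Fin 3) * M * symmetrizer ℂ (Fin 3)
      + (star (eminus 0 1) ⬝ᵥ M *ᵥ eminus 0 1 + star (eminus 1 2) ⬝ᵥ M *ᵥ eminus 1 2
          + star (eminus 0 2) ⬝ᵥ M *ᵥ eminus 0 2) • vecMulVec (ket 1 1) (star (ket 1 1)) := by
  rw [chan, Kproj_conjTranspose, Kproj_eq_symmetrizer]
  simp only [Kminus, vecMulVec_mul_mul_conjTranspose, add_smul, add_assoc]

theorem chan_apply_swap (M : Matrix (Fin 3 × Fin 3) (Fin 3 × Fin 3) ℂ) (p q : Fin 3 × Fin 3) :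
    chan M p.swap q.swap = chan M p q := by
  simp only [chan_eq, Matrix.add_apply, Matrix.smul_apply, symmetrizer_mul_mul_symmetrizer_apply,
    Prod.swap_swap, vecMulVec_apply, Pi.star_apply, ket_apply_swap]
  ring

theorem ptrFirst_eq_ptrSecond (N : Matrix (Fin 3 × Fin 3) (Fin 3 × Fin 3) ℂ)
    (h : ∀ p q, N p.swap q.swap = N p q) : ptrFirst N = ptrSecond N := by
  ext a b
  simp only [ptrFirst, ptrSecond, of_apply]
  exact Finset.sum_congr rfl fun c _ => h (a, c) (b, c)

theorem ptrFirst_add (M N : Matrix (Fin 3 × Fin 3) (Fin 3 × Fin 3) ℂ) :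
    ptrFirst (M + N) = ptrFirst M + ptrFirst N := by
  ext a b
  simp [ptrFirst, Finset.sum_add_distrib]

theorem ptrFirst_smul (c : ℂ) (M : Matrix (Fin 3 × Fin 3) (Fin 3 × Fin 3) ℂ) :
    ptrFirst (c • M) = c • ptrFirst M := by
  ext a b
  simp [ptrFirst, Finset.mul_sum]

theorem ptrFirst_vecMulVec_ket (a b : Fin 3) :
    ptrFirst (vecMulVec (ket a b) (star (ket a b))) = Matrix.single b b 1 := by
  ext i j
  simp only [ptrFirst, ket, of_apply, vecMulVec_apply, Pi.star_apply, Prod.ext_iff,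
    Matrix.single_apply]
  rcases eq_or_ne i b with rfl | hi <;> rcases eq_or_ne j i with rfl | hj <;> simp [*, Ne.symm]

theorem ptrFirst_symmetrizer_kronecker (A B : Matrix (Fin 3) (Fin 3) ℂ) :
    ptrFirst (symmetrizer ℂ (Fin 3) * (A ⊗ₖ B) * symmetrizer ℂ (Fin 3))
      = (4 : ℂ)⁻¹ • (A.trace • B + A * B + B * A + B.trace • A) := by
  ext a b
  simp only [ptrFirst, of_apply, symmetrizer_mul_mul_symmetrizer_apply]
  simp only [kroneckerMap_apply, Prod.swap, Matrix.smul_apply, Matrix.add_apply, mul_apply,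
    trace, diag, Fin.sum_univ_three, smul_eq_mul]
  ring

theorem ptrFirst_chan_rhoTilde_kronecker_tauCat (δ : ℝ) :
    ptrFirst (chan (rhoTilde δ ⊗ₖ tauCat δ)) = tauCat δ := by
  rw [chan_eq, ptrFirst_add, ptrFirst_smul, ptrFirst_symmetrizer_kronecker,
    ptrFirst_vecMulVec_ket]
  simp only [star_eminus_dotProduct_mulVec_eminus, kroneckerMap_apply]
  ext a b
  fin_cases a <;> fin_cases b <;>
    simp [rhoTilde, tauCat, trace, Fin.sum_univ_three] <;> ring

end ThreeLevel

theorem three_level_coherence_broadcasting (δ : ℝ) :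
    Kprojᴴ * Kproj + (Kminus 0 1)ᴴ * Kminus 0 1 + (Kminus 1 2)ᴴ * Kminus 1 2
        + (Kminus 0 2)ᴴ * Kminus 0 2 = 1 ∧
    ptrFirst (chan (rhoTilde δ ⊗ₖ tauCat δ)) = tauCat δ ∧
    ptrSecond (chan (rhoTilde δ ⊗ₖ tauCat δ)) 0 2 = (152 * δ ^ 2 / 225 : ℂ) ∧
    (δ ≠ 0 → (0 : ℝ) < 152 * δ ^ 2 / 225) := by
  have hcat := ptrFirst_chan_rhoTilde_kronecker_tauCat δ
  refine ⟨kraus_completeness, hcat, ?_, fun hδ => by positivity⟩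
  rw [← ptrFirst_eq_ptrSecond _ (chan_apply_swap _), hcat]
  simp [tauCat]
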